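/- Let F_dod ∈ ℝ[x_1,…,x_20] be the facet polynomial of the regular dodecahedron, let Λ be the set of the 90 degree-two monomials ∂_i∂_j (i < j) with ∂_i∂_j·F_dod ≠ 0, and let b = (b_1,…,b_20) ∈ ℝ^20 with b_i = 0 for i ∈ {6,7,8,9,10} and b_i = 1 otherwise. Then the 90×90 second Hessian matrix H²_{F_dod}(b) = ((e·e'·F_dod)(b))_{e,e'∈Λ} is degenerate, i.e. its determinant is 0. Consequently, ℓ_b = Σ_{i ∉ {6,7,8,9,10}} ∂_i is not a strong Lefschetz element of ℝ[∂_1,…,∂_20]/Ann(F_dod). -/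

import Mathlib

open MvPolynomial

noncomputable section

lemma pderiv_commute {n : ℕ} (i j : Fin n) (f : MvPolynomial (Fin n) ℝ) :
    pderiv i (pderiv j f) = pderiv j (pderiv i f) := by
  rcases eq_or_ne i j with rfl | hij
  · rfl
  · induction f using MvPolynomial.induction_on' with
    | monomial m a =>
        simp only [pderiv_monomial]
        have h1 : (m - Finsupp.single j 1 : Fin n →₀ ℕ) i = m i := by
          rw [Finsupp.tsub_apply, Finsupp.single_eq_of_ne hij, tsub_zero]
        have h2 : (m - Finsupp.single i 1 : Fin n →₀ ℕ) j = m j := by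
          rw [Finsupp.tsub_apply, Finsupp.single_eq_of_ne hij.symm, tsub_zero]
        rw [h1, h2, tsub_right_comm]
        congr 1
        ring
    | add p q hp hq => simp [hp, hq]

/-- The set of the partial derivative operators `∂ᵢ` on `ℝ[x₁, …, xₙ]`. -/
def pdSet (n : ℕ) : Set (Module.End ℝ (MvPolynomial (Fin n) ℝ)) :=
  Set.range fun i : Fin n =>
    ((pderiv i : Derivation ℝ (MvPolynomial (Fin n) ℝ) (MvPolynomial (Fin n) ℝ)) :
      MvPolynomial (Fin n) ℝ →ₗ[ℝ] MvPolynomial (Fin n) ℝ)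

instance pdCommRing (n : ℕ) : CommRing (Algebra.adjoin ℝ (pdSet n)) :=
  Algebra.adjoinCommRingOfComm ℝ (by
    rintro _ ⟨i, rfl⟩ _ ⟨j, rfl⟩
    apply LinearMap.ext
    intro f
    exact pderiv_commute i j f)

/-- The algebra map sending a polynomial `f` (in the "∂ variables") to the differential
operator `f(∂₁, …, ∂ₙ)` acting on `ℝ[x₁, …, xₙ]`; thus `dop n f F` is the result of
applying the differential operator `f(∂₁, …, ∂ₙ)` to the polynomial `F`. -/
def dop (n : ℕ) : MvPolynomial (Fin n) ℝ →ₐ[ℝ] Module.End ℝ (MvPolynomial (Fin n) ℝ) :=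
  (Algebra.adjoin ℝ (pdSet n)).val.comp
    (aeval fun i : Fin n =>
      (⟨_, Algebra.subset_adjoin (Set.mem_range_self i)⟩ : Algebra.adjoin ℝ (pdSet n)))

/-- `Ann F`, the annihilator of `F`: the ideal of all differential-operator polynomials `f`
with `f(∂₁, …, ∂ₙ) F = 0`. -/
def annIdeal {n : ℕ} (F : MvPolynomial (Fin n) ℝ) : Ideal (MvPolynomial (Fin n) ℝ) where
  carrier := {f | dop n f F = 0}
  add_mem' := by
    intro a b ha hb
    simp only [Set.mem_setOf_eq] at *
    rw [map_add, LinearMap.add_apply, ha, hb, add_zero]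
  zero_mem' := by
    simp only [Set.mem_setOf_eq, map_zero, LinearMap.zero_apply]
  smul_mem' := by
    intro c f hf
    simp only [Set.mem_setOf_eq] at *
    rw [smul_eq_mul, map_mul, Module.End.mul_apply, hf, map_zero]

/-- The Artinian Gorenstein algebra `A_F = ℝ[∂₁, …, ∂ₙ]/Ann(F)`. -/
abbrev AF {n : ℕ} (F : MvPolynomial (Fin n) ℝ) := MvPolynomial (Fin n) ℝ ⧸ annIdeal F

/-- The degree-`k` homogeneous component `(A_F)_k` of `A_F`, as a submodule of `A_F`:
the image of the space of homogeneous polynomials of degree `k` under the quotient map. -/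
def gradeA {n : ℕ} (F : MvPolynomial (Fin n) ℝ) (k : ℕ) : Submodule ℝ (AF F) :=
  Submodule.map (Ideal.Quotient.mkₐ ℝ (annIdeal F)).toLinearMap
    (homogeneousSubmodule (Fin n) ℝ k)

/-- `ℓ ∈ A_F` is a strong Lefschetz element of `A_F` (with socle degree `s`) if the
multiplication map `×ℓ^(s-2k) : (A_F)_k → (A_F)_(s-k)` is bijective for every `k` with
`0 ≤ k ≤ s/2`. -/
def IsSLelem {n : ℕ} (F : MvPolynomial (Fin n) ℝ) (s : ℕ) (ℓ : AF F) : Prop :=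
  ∀ k : ℕ, 2 * k ≤ s →
    Set.BijOn (fun f => ℓ ^ (s - 2 * k) * f) (gradeA F k) (gradeA F (s - k))

/-- `A_F` (with socle degree `s`) has the strong Lefschetz property. -/
def HasSLP {n : ℕ} (F : MvPolynomial (Fin n) ℝ) (s : ℕ) : Prop :=
  ∃ ℓ ∈ gradeA F 1, IsSLelem F s ℓ

/-- `A_F` (with socle degree `s`) satisfies the Hodge–Riemann relation with respect to the
class `ℓ` of a linear form `L`: for every `k` with `0 ≤ k ≤ s/2`, the bilinear form
`Q^k_ℓ(f, g) = (-1)^k P^k(f, ℓ^(s-2k) g)` (where `P^k(f, g) = f g F` is the Poincaré duality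
pairing) is positive definite on the kernel of `×ℓ^(s-2k+1) : (A_F)_k → (A_F)_(s-k+1)`,
i.e. `Q^k_ℓ(f, f) > 0` for every nonzero `f ∈ (A_F)_k` in that kernel. -/
def SatisfiesHRR {n : ℕ} (F : MvPolynomial (Fin n) ℝ) (s : ℕ) (L : MvPolynomial (Fin n) ℝ) :
    Prop :=
  ∀ k : ℕ, 2 * k ≤ s →
    ∀ f ∈ homogeneousSubmodule (Fin n) ℝ k,
      dop n (L ^ (s - 2 * k + 1) * f) F = 0 →
      Ideal.Quotient.mk (annIdeal F) f ≠ 0 →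
      0 < (-1 : ℝ) ^ k * constantCoeff (dop n (L ^ (s - 2 * k) * f * f) F)

/-- The facet polynomial of the regular dodecahedron
(vertices `0,…,19` standing for `1,…,20`). -/
def Fdod : MvPolynomial (Fin 20) ℝ :=
  X 0 * X 1 * X 2 * X 3 * X 4 + X 0 * X 1 * X 5 * X 6 * X 18 +
    X 1 * X 2 * X 6 * X 7 * X 19 + X 2 * X 3 * X 7 * X 8 * X 15 +
    X 3 * X 4 * X 8 * X 9 * X 16 + X 0 * X 4 * X 5 * X 9 * X 17 +
    X 10 * X 11 * X 12 * X 13 * X 14 + X 8 * X 10 * X 11 * X 15 * X 16 +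
    X 9 * X 11 * X 12 * X 16 * X 17 + X 5 * X 12 * X 13 * X 17 * X 18 +
    X 6 * X 13 * X 14 * X 18 * X 19 + X 7 * X 10 * X 14 * X 15 * X 19

/-- The point `b ∈ ℝ²⁰` with `bᵢ = 0` for `i ∈ {6,7,8,9,10}` (1-based), i.e. for
`i ∈ {5,6,7,8,9}` in `0`-based indexing, and `bᵢ = 1` otherwise. -/
def bDod : Fin 20 → ℝ := fun i => if (i : ℕ) ∈ ({5, 6, 7, 8, 9} : Finset ℕ) then 0 else 1

/-- The point `c ∈ ℝ²⁰` with `c₁ = 0` and `cᵢ = 1` for `i ≠ 1` (1-based). -/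
def cDod : Fin 20 → ℝ := fun i => if i = 0 then 0 else 1

open Classical in
/-- The set `Λ` of pairs `i < j` such that the degree-two monomial `∂ᵢ∂ⱼ` does not
annihilate `F_dod`, i.e. the pairs of vertices lying on a common face of the regular
dodecahedron; they index the second Hessian matrix of `F_dod`. -/
noncomputable def lamDod : Finset (Fin 20 × Fin 20) :=
  Finset.univ.filter fun p => p.1 < p.2 ∧ pderiv p.1 (pderiv p.2 Fdod) ≠ 0


/-! With `b` the given point, `∂_b = Σ bᵢ∂ᵢ` kills the cubic
`G = (∂₂ - ∂₁)∂₁₉ F_dod = (x₁ - x₂)x₆x₇`, because `b₁ = b₂ = 1` and `b₆ = b₇ = 0`.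
Hence `ℓ_b` annihilates the nonzero class of `Q = (∂₂ - ∂₁)∂₁₉` in `(A_F)₂`, so
`×ℓ_b : (A_F)₂ → (A_F)₃` is not injective. By Euler's identity, `ℓ_b φ = 0` forces
`φ(b) = 0` for every homogeneous `φ` of positive degree; applied to the second derivatives of
`G`, this says that the coefficient vector of `Q` is in the kernel of the second Hessian at `b`. -/

namespace MvPolynomial

section DirectionalDerivative

variable {σ : Type*} [Fintype σ]

def dirDeriv (b : σ → ℝ) : Derivation ℝ (MvPolynomial σ ℝ) (MvPolynomial σ ℝ) :=
  ∑ i, b i • pderiv i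

lemma dirDeriv_apply (b : σ → ℝ) (f : MvPolynomial σ ℝ) :
    dirDeriv b f = ∑ i, b i • pderiv i f := by
  rw [dirDeriv, ← Derivation.coeFnAddMonoidHom_apply, map_sum, Finset.sum_apply]
  rfl

lemma dirDeriv_X [DecidableEq σ] (b : σ → ℝ) (k : σ) : dirDeriv b (X k) = C (b k) := by
  simp [dirDeriv_apply, pderiv_X, Pi.single_apply, smul_eq_C_mul]

/-- Euler's identity evaluated at the direction `b` itself. -/
lemma IsHomogeneous.eval_dirDeriv {φ : MvPolynomial σ ℝ} {d : ℕ} (h : φ.IsHomogeneous d)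
    (b : σ → ℝ) : eval b (dirDeriv b φ) = d * eval b φ := by
  have := congrArg (eval b) h.sum_X_mul_pderiv
  simpa [dirDeriv_apply, map_sum, smul_eval, nsmul_eq_mul] using this

lemma IsHomogeneous.eval_eq_zero_of_dirDeriv_eq_zero {φ : MvPolynomial σ ℝ} {d : ℕ}
    (h : φ.IsHomogeneous d) (hd : d ≠ 0) {b : σ → ℝ} (hφ : dirDeriv b φ = 0) :
    eval b φ = 0 := by
  have := h.eval_dirDeriv b
  rw [hφ, map_zero] at this
  exact (mul_eq_zero.mp this.symm).resolve_left (Nat.cast_ne_zero.mpr hd)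

end DirectionalDerivative

variable {n : ℕ}

lemma pderiv_dirDeriv (b : Fin n → ℝ) (i : Fin n) (f : MvPolynomial (Fin n) ℝ) :
    pderiv i (dirDeriv b f) = dirDeriv b (pderiv i f) := by
  simp [dirDeriv_apply, map_sum, pderiv_commute i]

lemma eval_pderiv_pderiv_eq_zero_of_dirDeriv_eq_zero {G : MvPolynomial (Fin n) ℝ}
    (hG : G.IsHomogeneous 3) {b : Fin n → ℝ} (hb : dirDeriv b G = 0) (i j : Fin n) :
    eval b (pderiv i (pderiv j G)) = 0 :=
  hG.pderiv.pderiv.eval_eq_zero_of_dirDeriv_eq_zero one_ne_zero <| by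
    rw [← pderiv_dirDeriv, ← pderiv_dirDeriv, hb, map_zero, map_zero]

end MvPolynomial

open MvPolynomial

variable {n : ℕ}

lemma dop_X_apply (i : Fin n) (f : MvPolynomial (Fin n) ℝ) : dop n (X i) f = pderiv i f := by
  simp [dop]

lemma dop_X_mul_X (i j : Fin n) (F : MvPolynomial (Fin n) ℝ) :
    dop n (X i * X j) F = pderiv i (pderiv j F) := by
  rw [map_mul, Module.End.mul_apply, dop_X_apply, dop_X_apply]

lemma dop_linearForm (b : Fin n → ℝ) (f : MvPolynomial (Fin n) ℝ) :
    dop n (∑ i, C (b i) * X i) f = dirDeriv b f := by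
  have dop_C (c : ℝ) : dop n (C c) = c • 1 := by
    rw [← algebraMap_eq, AlgHom.commutes, Algebra.algebraMap_eq_smul_one]
  simp [map_sum, dop_C, dop_X_apply, dirDeriv_apply]

lemma mem_annIdeal {F f : MvPolynomial (Fin n) ℝ} : f ∈ annIdeal F ↔ dop n f F = 0 :=
  Iff.rfl

lemma not_isSLelem_of_dop_eq_zero {F L Q : MvPolynomial (Fin n) ℝ} {s k : ℕ}
    (hk : 2 * k ≤ s) (hQ : Q.IsHomogeneous k) (hQF : dop n Q F ≠ 0)
    (hLQ : dop n (L ^ (s - 2 * k) * Q) F = 0) :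
    ¬ IsSLelem F s (Ideal.Quotient.mk (annIdeal F) L) := by
  intro hSL
  have hmk : Ideal.Quotient.mk (annIdeal F) Q = 0 := by
    refine (hSL k hk).injOn ⟨Q, hQ, rfl⟩ (gradeA F k).zero_mem ?_
    simp only [mul_zero, AlgHom.toLinearMap_apply, Ideal.Quotient.mkₐ_eq_mk]
    rw [← map_pow, ← map_mul, Ideal.Quotient.eq_zero_iff_mem, mem_annIdeal]
    exact hLQ
  exact hQF (mem_annIdeal.mp (Ideal.Quotient.eq_zero_iff_mem.mp hmk))

/-- `e_{a'} - e_a` is a kernel vector: its image consists of the second derivatives at `b` of the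
cubic `∂_{a'}F - ∂_aF`, which vanish by Euler's identity. -/
lemma det_secondHessian_eq_zero (F : MvPolynomial (Fin n) ℝ) (Λ : Finset (Fin n × Fin n))
    (b : Fin n → ℝ) {a a' : Fin n × Fin n} (ha : a ∈ Λ) (ha' : a' ∈ Λ) (hne : a ≠ a')
    (hG : (pderiv a'.1 (pderiv a'.2 F) - pderiv a.1 (pderiv a.2 F)).IsHomogeneous 3)
    (hb : dirDeriv b (pderiv a'.1 (pderiv a'.2 F) - pderiv a.1 (pderiv a.2 F)) = 0) :
    (Matrix.of fun e e' : Λ =>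
        eval b (pderiv e.1.1 (pderiv e.1.2 (pderiv e'.1.1 (pderiv e'.1.2 F))))).det = 0 := by
  classical
  rw [← Matrix.exists_mulVec_eq_zero_iff]
  refine ⟨Pi.single ⟨a', ha'⟩ 1 - Pi.single ⟨a, ha⟩ 1, fun h => ?_, ?_⟩
  · have := congrFun h ⟨a', ha'⟩
    simp [hne.symm] at this
  · ext e
    have := eval_pderiv_pderiv_eq_zero_of_dirDeriv_eq_zero hG hb e.1.1 e.1.2
    simpa [Matrix.mulVec_sub, Matrix.mulVec_single_one, sub_eq_zero] using this

lemma pderiv_pderiv_Fdod_0_18 : pderiv (0 : Fin 20) (pderiv 18 Fdod) = X 1 * X 5 * X 6 := by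
  simp [Fdod]; ring

lemma pderiv_pderiv_Fdod_1_18 : pderiv (1 : Fin 20) (pderiv 18 Fdod) = X 0 * X 5 * X 6 := by
  simp [Fdod]; ring

lemma pderiv_pderiv_Fdod_sub :
    pderiv (1 : Fin 20) (pderiv 18 Fdod) - pderiv 0 (pderiv 18 Fdod) =
      (X 0 - X 1) * X 5 * X 6 := by
  rw [pderiv_pderiv_Fdod_0_18, pderiv_pderiv_Fdod_1_18]; ring

lemma mem_lamDod_0_18 : ((0 : Fin 20), (18 : Fin 20)) ∈ lamDod := by
  refine Finset.mem_filter.mpr ⟨Finset.mem_univ _, by decide, ?_⟩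
  rw [pderiv_pderiv_Fdod_0_18]
  exact mul_ne_zero (mul_ne_zero (X_ne_zero _) (X_ne_zero _)) (X_ne_zero _)

lemma mem_lamDod_1_18 : ((1 : Fin 20), (18 : Fin 20)) ∈ lamDod := by
  refine Finset.mem_filter.mpr ⟨Finset.mem_univ _, by decide, ?_⟩
  rw [pderiv_pderiv_Fdod_1_18]
  exact mul_ne_zero (mul_ne_zero (X_ne_zero _) (X_ne_zero _)) (X_ne_zero _)

lemma dirDeriv_bDod_cubic :
    dirDeriv bDod ((X 0 - X 1) * X 5 * X 6 : MvPolynomial (Fin 20) ℝ) = 0 := by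
  simp [dirDeriv_X, bDod]

lemma isHomogeneous_cubic :
    ((X 0 - X 1) * X 5 * X 6 : MvPolynomial (Fin 20) ℝ).IsHomogeneous 3 :=
  (((isHomogeneous_X _ _).sub (isHomogeneous_X _ _)).mul (isHomogeneous_X _ _)).mul
    (isHomogeneous_X _ _)

lemma cubic_ne_zero : ((X 0 - X 1) * X 5 * X 6 : MvPolynomial (Fin 20) ℝ) ≠ 0 :=
  mul_ne_zero (mul_ne_zero (sub_ne_zero.mpr ((X_injective (R := ℝ)).ne (by decide)))
    (X_ne_zero _)) (X_ne_zero _)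

lemma dop_Fdod_eq_cubic :
    dop 20 (X 1 * X 18 - X 0 * X 18) Fdod = (X 0 - X 1) * X 5 * X 6 := by
  rw [map_sub, LinearMap.sub_apply, dop_X_mul_X, dop_X_mul_X, pderiv_pderiv_Fdod_sub]

/-- The second Hessian matrix of the facet polynomial of the regular dodecahedron with
respect to `Λ`, evaluated at `b` (where `bᵢ = 0` for `i ∈ {6,7,8,9,10}` and `bᵢ = 1`
otherwise), is degenerate; consequently `ℓ_b = Σ_{i ∉ {6,7,8,9,10}} ∂ᵢ` is not a strong
Lefschetz element of the associated algebra. -/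
theorem dodecahedron_second_hessian_at_b_degenerate :
    (Matrix.of fun e e' : lamDod =>
        eval bDod
          (pderiv e.1.1 (pderiv e.1.2 (pderiv e'.1.1 (pderiv e'.1.2 Fdod))))).det = 0 ∧
      ¬ IsSLelem Fdod 5 (Ideal.Quotient.mk (annIdeal Fdod) (∑ i, C (bDod i) * X i)) := by
  constructor
  · exact det_secondHessian_eq_zero Fdod lamDod bDod mem_lamDod_0_18 mem_lamDod_1_18 (by decide)
      (pderiv_pderiv_Fdod_sub ▸ isHomogeneous_cubic)
      (pderiv_pderiv_Fdod_sub ▸ dirDeriv_bDod_cubic)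
  · refine not_isSLelem_of_dop_eq_zero (k := 2) (by norm_num)
      (((isHomogeneous_X _ _).mul (isHomogeneous_X _ _)).sub
        ((isHomogeneous_X _ _).mul (isHomogeneous_X _ _))) (dop_Fdod_eq_cubic ▸ cubic_ne_zero) ?_
    rw [pow_one, map_mul, Module.End.mul_apply, dop_Fdod_eq_cubic, dop_linearForm,
      dirDeriv_bDod_cubic]
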